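/- Suppose a linear map A : H_n → R^m satisfies the Frobenius-robust rank null space property with respect to ℓ_q of order r with constants 0 < ρ < 1 and τ > 0, restricted to the null space: for every M ∈ ker(A), ‖M_r‖_F ≤ (ρ/√r)‖M_{r,c}‖_*. Then for any two Hermitian matrices X, Z with A(X) = A(Z) and ‖Z‖_* ≤ ‖X‖_*, one has ‖X − Z‖_* ≤ (2(1+ρ)/(1−ρ)) · ‖X_{r,c}‖_*, where X_{r,c} denotes the tail of singular values of X beyond the r largest. -/

import Mathlib

open scoped BigOperators
open MeasureTheory Matrix
open scoped ComplexOrder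

noncomputable section

namespace RT

instance {n m : ℕ} : MeasurableSpace (Matrix (Fin n) (Fin m) ℝ) :=
  inferInstanceAs (MeasurableSpace (Fin n → Fin m → ℝ))

/-- the values of a real tuple sorted in nonincreasing order -/
def sortDesc {n : ℕ} (f : Fin n → ℝ) : Fin n → ℝ :=
  fun i => - ((fun j => - f j) ∘ (Tuple.sort (fun j => - f j))) i

/-- singular values of a square complex matrix, in nonincreasing order -/
def singVals {n : ℕ} (M : Matrix (Fin n) (Fin n) ℂ) : Fin n → ℝ :=
  sortDesc (fun i =>
    Real.sqrt ((Matrix.isHermitian_conjTranspose_mul_self M).eigenvalues i))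

/-- `‖M_r‖_F`: Frobenius norm of the `r` largest singular values -/
def headFro {n : ℕ} (M : Matrix (Fin n) (Fin n) ℂ) (r : ℕ) : ℝ :=
  Real.sqrt (∑ i : Fin n, if (i : ℕ) < r then (singVals M i) ^ 2 else 0)

/-- `‖M_{r,c}‖_F`: Frobenius norm of the tail singular values -/
def tailFro {n : ℕ} (M : Matrix (Fin n) (Fin n) ℂ) (r : ℕ) : ℝ :=
  Real.sqrt (∑ i : Fin n, if r ≤ (i : ℕ) then (singVals M i) ^ 2 else 0)

/-- `‖M_r‖_*`: sum of the `r` largest singular values -/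
def headNuc {n : ℕ} (M : Matrix (Fin n) (Fin n) ℂ) (r : ℕ) : ℝ :=
  ∑ i : Fin n, if (i : ℕ) < r then singVals M i else 0

/-- `‖M_{r,c}‖_*`: sum of the singular values beyond the `r` largest -/
def tailNuc {n : ℕ} (M : Matrix (Fin n) (Fin n) ℂ) (r : ℕ) : ℝ :=
  ∑ i : Fin n, if r ≤ (i : ℕ) then singVals M i else 0

/-- nuclear norm -/
def nucNorm {n : ℕ} (M : Matrix (Fin n) (Fin n) ℂ) : ℝ :=
  ∑ i : Fin n, singVals M i

/-- Frobenius norm -/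
def froNorm {n : ℕ} (M : Matrix (Fin n) (Fin n) ℂ) : ℝ :=
  Real.sqrt (∑ i : Fin n, (singVals M i) ^ 2)

/-- `ℓ_q` norm on `ℝ^m` -/
def lqNorm {m : ℕ} (q : ℝ) (v : Fin m → ℝ) : ℝ :=
  (∑ j : Fin m, |v j| ^ q) ^ (1 / q)

/-- the Frobenius-robust rank null space property of order `r` with
constants `ρ`, `τ` with respect to `ℓ_q`, for a map on Hermitian matrices -/
def FrobRobustNSP {n m : ℕ} (A : Matrix (Fin n) (Fin n) ℂ → (Fin m → ℝ))
    (q : ℝ) (r : ℕ) (ρ τ : ℝ) : Prop :=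
  ∀ M : Matrix (Fin n) (Fin n) ℂ, M.IsHermitian →
    headFro M r ≤ (ρ / Real.sqrt r) * tailNuc M r + τ * lqNorm q (A M)

/-- rank one measurement map with real measurement vectors `a j`,
acting on complex Hermitian matrices: `X ↦ (tr(X a_j a_j^*))_j` -/
def measR {n m : ℕ} (a : Fin m → Fin n → ℝ) (X : Matrix (Fin n) (Fin n) ℂ) :
    Fin m → ℝ :=
  fun j => (Matrix.trace (X *
    Matrix.vecMulVec (fun k => (a j k : ℂ)) (fun k => (a j k : ℂ)))).re

/-- rank one measurement map with complex measurement vectors `a j`: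
`X ↦ (tr(X a_j a_j^*))_j` -/
def measC {n m : ℕ} (a : Fin m → Fin n → ℂ) (X : Matrix (Fin n) (Fin n) ℂ) :
    Fin m → ℝ :=
  fun j => (Matrix.trace (X * Matrix.vecMulVec (a j) (star (a j)))).re

/-- largest eigenvalue of a (Hermitian) matrix (junk value `0` otherwise) -/
def eigMax {𝕜 : Type*} [RCLike 𝕜] {n : ℕ} (M : Matrix (Fin n) (Fin n) 𝕜) : ℝ := by
  classical exact if h : M.IsHermitian then ⨆ i, h.eigenvalues i else 0

/-- smallest eigenvalue of a (Hermitian) matrix (junk value `0` otherwise) -/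
def eigMin {𝕜 : Type*} [RCLike 𝕜] {n : ℕ} (M : Matrix (Fin n) (Fin n) 𝕜) : ℝ := by
  classical exact if h : M.IsHermitian then ⨅ i, h.eigenvalues i else 0

/-- positive semidefinite square root (junk value `0` if not psd) -/
def psdSqrt {n : ℕ} (M : Matrix (Fin n) (Fin n) ℝ) : Matrix (Fin n) (Fin n) ℝ := by
  classical exact if h : M.PosSemidef then
    (h.1.eigenvectorUnitary : Matrix (Fin n) (Fin n) ℝ) *
      Matrix.diagonal ((RCLike.ofReal : ℝ → ℝ) ∘ Real.sqrt ∘ h.1.eigenvalues) *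
      (star h.1.eigenvectorUnitary : Matrix (Fin n) (Fin n) ℝ) else 0

/-- the law of an `n × m` matrix with i.i.d. standard Gaussian entries -/
def gaussMatrix (n m : ℕ) : Measure (Matrix (Fin n) (Fin m) ℝ) :=
  Measure.pi fun _ : Fin n => Measure.pi fun _ : Fin m =>
    ProbabilityTheory.gaussianReal 0 1

/-- `μ` is the uniform (Haar) distribution on the Stiefel manifold `V_n^m`:
a probability measure carried by `{Q : Qᵀ Q = 1}` which is invariant under
left multiplication by orthogonal matrices. -/
def IsHaarStiefel {m n : ℕ} (μ : Measure (Matrix (Fin m) (Fin n) ℝ)) : Prop :=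
  IsProbabilityMeasure μ ∧
    μ {Q | Qᵀ * Q = 1} = 1 ∧
    ∀ O : Matrix (Fin m) (Fin m) ℝ, Oᵀ * O = 1 →
      Measure.map (fun Q => O * Q) μ = μ

end RT


instance (n m : ℕ) : MeasureTheory.IsProbabilityMeasure (RT.gaussMatrix n m) := by
  unfold RT.gaussMatrix
  exact MeasureTheory.Measure.pi.instIsProbabilityMeasure _


/-!
Put `M = X - Z`, a Hermitian matrix in the kernel of `A`. Mirsky's inequality
`∑ₖ |σₖ(X) - σₖ(M)| ≤ ‖X - M‖_* = ‖Z‖_* ≤ ‖X‖_*`, split into the first `r` indices and the rest,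
gives `‖M_{r,c}‖_* ≤ ‖M_r‖_* + 2 ‖X_{r,c}‖_*`, while the null space property and Cauchy–Schwarz
give `‖M_r‖_* ≤ ρ ‖M_{r,c}‖_*`. Hence `(1 - ρ) ‖M_{r,c}‖_* ≤ 2 ‖X_{r,c}‖_*` and
`‖M‖_* ≤ (1 + ρ) ‖M_{r,c}‖_*`.

For Hermitian matrices the singular values are the sorted absolute eigenvalues, so Mirsky's
inequality reduces to Lidskii's bound `∑ₖ |λ↓ₖ(X) - λ↓ₖ(Z)| ≤ ‖X - Z‖_*`. Writing
`X - Z = P - N` with `P, N ⪰ 0` and `tr P + tr N = ‖X - Z‖_*`, the matrix `Y = Z + P = X + N`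
dominates both `X` and `Z`, so by Weyl's monotonicity theorem (a Courant–Fischer dimension count)
the left side is at most `(tr Y - tr X) + (tr Y - tr Z) = tr N + tr P`.
-/

namespace RT

section Sorting

variable {n : ℕ}

def sortDescPerm (f : Fin n → ℝ) : Equiv.Perm (Fin n) := Tuple.sort fun j => -f j

lemma sortDesc_eq_comp (f : Fin n → ℝ) : sortDesc f = f ∘ sortDescPerm f := by
  funext i
  simp [sortDesc, sortDescPerm]

lemma antitone_sortDesc (f : Fin n → ℝ) : Antitone (sortDesc f) := fun i j hij => by
  simpa [sortDesc] using Tuple.monotone_sort (fun j => -f j) hij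

lemma sortDesc_comp_perm (f : Fin n → ℝ) (σ : Equiv.Perm (Fin n)) :
    sortDesc (f ∘ σ) = sortDesc f := by
  funext i
  have h := congrFun (Tuple.comp_perm_comp_sort_eq_comp_sort (f := fun j => -f j) (σ := σ)) i
  simp only [sortDesc, Function.comp_def] at h ⊢
  rw [h]

lemma sum_sortDesc (f : Fin n → ℝ) : ∑ i, sortDesc f i = ∑ i, f i := by
  rw [sortDesc_eq_comp]
  exact Equiv.sum_comp _ f

lemma sortDesc_nonneg {f : Fin n → ℝ} (hf : ∀ i, 0 ≤ f i) (i : Fin n) : 0 ≤ sortDesc f i := by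
  rw [sortDesc_eq_comp]
  exact hf _

lemma map_univ_sortDesc (f : Fin n → ℝ) :
    Finset.univ.val.map (sortDesc f) = Finset.univ.val.map f := by
  rw [sortDesc_eq_comp, ← Multiset.map_map, Multiset.map_univ_val_equiv]

lemma sortDesc_eq_of_map_univ_eq {f g : Fin n → ℝ}
    (h : Finset.univ.val.map f = Finset.univ.val.map g) : sortDesc f = sortDesc g := by
  have hperm : (List.ofFn (sortDesc f)).Perm (List.ofFn (sortDesc g)) := by
    rw [← Multiset.coe_eq_coe, ← Fin.univ_val_map, ← Fin.univ_val_map, map_univ_sortDesc,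
      map_univ_sortDesc, h]
  exact List.ofFn_injective <| hperm.eq_of_pairwise'
    (List.pairwise_ofFn (R := (· ≥ ·)).mpr fun _ _ hij => antitone_sortDesc f hij.le)
    (List.pairwise_ofFn (R := (· ≥ ·)).mpr fun _ _ hij => antitone_sortDesc g hij.le)

lemma le_sortDesc_of_le_card {f : Fin n → ℝ} {t : ℝ} {i : Fin n} (T : Finset (Fin n))
    (hcard : i.val + 1 ≤ T.card) (hT : ∀ j ∈ T, t ≤ f j) : t ≤ sortDesc f i := by
  obtain ⟨p, hp, hip⟩ : ∃ p ∈ T.image (sortDescPerm f).symm, i ≤ p := by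
    by_contra! hcon
    have := Finset.card_le_card fun p hp => Finset.mem_Iio.mpr (hcon p hp)
    rw [Finset.card_image_of_injective _ (Equiv.injective _), Fin.card_Iio] at this
    omega
  obtain ⟨j, hj, rfl⟩ := Finset.mem_image.mp hp
  calc t ≤ f j := hT j hj
    _ = sortDesc f ((sortDescPerm f).symm j) := by simp [sortDesc_eq_comp]
    _ ≤ sortDesc f i := antitone_sortDesc f hip

lemma sortDesc_le_of_mem_image_Iic {f : Fin n → ℝ} {k i : Fin n}
    (hi : i ∈ (Finset.Iic k).image (sortDescPerm f)) : sortDesc f k ≤ f i := by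
  obtain ⟨p, hp, rfl⟩ := Finset.mem_image.mp hi
  calc sortDesc f k ≤ sortDesc f p := antitone_sortDesc f (Finset.mem_Iic.mp hp)
    _ = f (sortDescPerm f p) := by rw [sortDesc_eq_comp]; rfl

lemma le_sortDesc_of_mem_image_Ici {f : Fin n → ℝ} {k i : Fin n}
    (hi : i ∈ (Finset.Ici k).image (sortDescPerm f)) : f i ≤ sortDesc f k := by
  obtain ⟨p, hp, rfl⟩ := Finset.mem_image.mp hi
  calc f (sortDescPerm f p) = sortDesc f p := by rw [sortDesc_eq_comp]; rfl
    _ ≤ sortDesc f k := antitone_sortDesc f (Finset.mem_Ici.mp hp)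

lemma sortDesc_mono {f g : Fin n → ℝ} (hfg : f ≤ g) : sortDesc f ≤ sortDesc g := fun k =>
  le_sortDesc_of_le_card ((Finset.Iic k).image (sortDescPerm f))
    (by rw [Finset.card_image_of_injective _ (Equiv.injective _), Fin.card_Iic])
    fun _ hi => (sortDesc_le_of_mem_image_Iic hi).trans (hfg _)

lemma sum_abs_sortDesc_sub_le (u v : Fin n → ℝ) :
    ∑ i, |sortDesc u i - sortDesc v i| ≤ ∑ i, |u i - v i| := by
  set w : Fin n → ℝ := fun j => min (u j) (v j)
  -- `|a - b| = a + b - 2 min a b`, and sorting `min u v` lowers each entry below both sorts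
  have habs (a b : ℝ) : |a - b| = a + b - 2 * min a b := by
    rcases le_total a b with h | h
    · rw [abs_of_nonpos (by linarith), min_eq_left h]; ring
    · rw [abs_of_nonneg (by linarith), min_eq_right h]; ring
  have hw : ∀ i, sortDesc w i ≤ min (sortDesc u i) (sortDesc v i) := fun i =>
    le_min (sortDesc_mono (fun j => min_le_left _ _) i)
      (sortDesc_mono (fun j => min_le_right _ _) i)
  calc ∑ i, |sortDesc u i - sortDesc v i|
      ≤ ∑ i, (sortDesc u i + sortDesc v i - 2 * sortDesc w i) :=
        Finset.sum_le_sum fun i _ => by rw [habs]; linarith [hw i]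
    _ = ∑ i, (u i + v i - 2 * w i) := by
        simp only [Finset.sum_sub_distrib, Finset.sum_add_distrib, ← Finset.mul_sum,
          sum_sortDesc]
    _ = ∑ i, |u i - v i| := by simp only [habs, w]

end Sorting

section Spectrum

open Polynomial

variable {n : ℕ}

lemma map_univ_eigenvalues_of_eq_conj {A U : Matrix (Fin n) (Fin n) ℂ} (hA : A.IsHermitian)
    (hU : star U * U = 1) {d : Fin n → ℝ} (h : A = U * diagonal (fun i => (d i : ℂ)) * star U) :
    Finset.univ.val.map hA.eigenvalues = Finset.univ.val.map d := by
  have hchar : A.charpoly = ∏ i, (X - C (d i : ℂ)) := by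
    rw [h, charpoly_mul_comm, ← mul_assoc, hU, one_mul, charpoly_diagonal]
  have hroots := hA.roots_charpoly_eq_eigenvalues
  rw [hchar, Polynomial.roots_prod _ _ (by simp [Finset.prod_ne_zero_iff, X_sub_C_ne_zero])]
    at hroots
  apply Multiset.map_injective Complex.ofReal_injective
  simpa [Multiset.map_map, Function.comp_def] using hroots.symm

lemma singVals_eq_sortDesc_abs_eigenvalues {M : Matrix (Fin n) (Fin n) ℂ}
    (hM : M.IsHermitian) : singVals M = sortDesc fun i => |hM.eigenvalues i| := by
  set U : Matrix (Fin n) (Fin n) ℂ := ↑hM.eigenvectorUnitary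
  set D := diagonal fun i => (hM.eigenvalues i : ℂ)
  have hU : star U * U = 1 := (mem_unitaryGroup_iff').mp hM.eigenvectorUnitary.2
  have hspec : M = U * D * star U := hM.spectral_theorem
  have hsq : Mᴴ * M = U * diagonal (fun i => ((hM.eigenvalues i ^ 2 : ℝ) : ℂ)) * star U := by
    calc Mᴴ * M = (U * D * star U) * (U * D * star U) := by
          rw [hM.eq, ← hspec]
      _ = U * (D * (star U * U) * D) * star U := by simp only [mul_assoc]
      _ = U * diagonal (fun i => ((hM.eigenvalues i ^ 2 : ℝ) : ℂ)) * star U := by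
          rw [hU, mul_one, diagonal_mul_diagonal]
          push_cast
          ring_nf
  refine sortDesc_eq_of_map_univ_eq ?_
  have h := map_univ_eigenvalues_of_eq_conj (isHermitian_conjTranspose_mul_self M) hU hsq
  calc Finset.univ.val.map (fun i => √((isHermitian_conjTranspose_mul_self M).eigenvalues i))
      = (Finset.univ.val.map fun i => hM.eigenvalues i ^ 2).map Real.sqrt := by
        rw [← h, Multiset.map_map]; rfl
    _ = Finset.univ.val.map fun i => |hM.eigenvalues i| := by
        simp only [Multiset.map_map, Function.comp_def, Real.sqrt_sq_eq_abs]

lemma nucNorm_eq_sum_abs_eigenvalues {M : Matrix (Fin n) (Fin n) ℂ} (hM : M.IsHermitian) :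
    nucNorm M = ∑ i, |hM.eigenvalues i| := by
  rw [nucNorm, singVals_eq_sortDesc_abs_eigenvalues hM, sum_sortDesc]

lemma _root_.Matrix.IsHermitian.re_trace_eq_sum_eigenvalues {A : Matrix (Fin n) (Fin n) ℂ}
    (hA : A.IsHermitian) : A.trace.re = ∑ i, hA.eigenvalues i := by
  simp [hA.trace_eq_sum_eigenvalues, Complex.re_sum]

lemma _root_.Matrix.IsHermitian.exists_posSemidef_sub_eq {M : Matrix (Fin n) (Fin n) ℂ}
    (hM : M.IsHermitian) :
    ∃ P N : Matrix (Fin n) (Fin n) ℂ, P.PosSemidef ∧ N.PosSemidef ∧ M = P - N ∧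
      P.trace.re + N.trace.re = nucNorm M := by
  set U : Matrix (Fin n) (Fin n) ℂ := ↑hM.eigenvectorUnitary
  have hU : star U * U = 1 := (mem_unitaryGroup_iff').mp hM.eigenvectorUnitary.2
  let conj (d : Fin n → ℝ) := U * diagonal (fun i => (d i : ℂ)) * star U
  have hpsd (d : Fin n → ℝ) (hd : ∀ i, 0 ≤ d i) : (conj d).PosSemidef := by
    have hD : (diagonal fun i => (d i : ℂ)).PosSemidef :=
      posSemidef_diagonal_iff.mpr fun i => Complex.zero_le_real.mpr (hd i)
    simpa [conj, star_eq_conjTranspose] using hD.mul_mul_conjTranspose_same U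
  have htrace (d : Fin n → ℝ) : (conj d).trace.re = ∑ i, d i := by
    simp [conj, trace_mul_cycle, hU, trace_diagonal, Complex.re_sum]
  refine ⟨conj fun i => max (hM.eigenvalues i) 0, conj fun i => max (-hM.eigenvalues i) 0,
    hpsd _ fun i => le_max_right _ _, hpsd _ fun i => le_max_right _ _, ?_, ?_⟩
  · have hspec : M = U * diagonal (fun i => (hM.eigenvalues i : ℂ)) * star U :=
      hM.spectral_theorem
    refine hspec.trans ?_
    rw [← sub_mul, ← mul_sub, diagonal_sub]
    congr 3 with i
    rw [← Complex.ofReal_sub, max_zero_sub_max_neg_zero_eq_self]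
  · rw [htrace, htrace, ← Finset.sum_add_distrib, nucNorm_eq_sum_abs_eigenvalues hM]
    simp only [max_zero_add_max_neg_zero_eq_abs_self]

end Spectrum

section CourantFischer

variable {𝕜 E ι : Type*} [RCLike 𝕜] [NormedAddCommGroup E] [InnerProductSpace 𝕜 E] [Fintype ι]
  {T : E →ₗ[𝕜] E} {b : OrthonormalBasis ι 𝕜 E} {μ : ι → ℝ}

lemma re_inner_self_apply_eq_sum (hb : ∀ i, T (b i) = (μ i : 𝕜) • b i) (x : E) :
    RCLike.re (inner 𝕜 x (T x)) = ∑ i, μ i * ‖(inner 𝕜 (b i) x : 𝕜)‖ ^ 2 := by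
  have hTx : T x = ∑ i, ((μ i : 𝕜) * inner 𝕜 (b i) x) • b i := by
    conv_lhs => rw [← b.sum_repr' x]
    simp only [map_sum, map_smul, hb, smul_smul, mul_comm]
  rw [hTx, inner_sum, map_sum]
  refine Finset.sum_congr rfl fun i _ => ?_
  rw [inner_smul_right, ← inner_conj_symm x (b i), mul_assoc, RCLike.mul_conj]
  norm_cast

lemma inner_eq_zero_of_mem_span {S : Set ι} {x : E} (hx : x ∈ Submodule.span 𝕜 (b '' S))
    {j : ι} (hj : j ∉ S) : (inner 𝕜 (b j) x : 𝕜) = 0 := by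
  induction hx using Submodule.span_induction with
  | mem y hy =>
    obtain ⟨i, hi, rfl⟩ := hy
    exact b.orthonormal.2 fun h => hj (h ▸ hi)
  | zero => exact inner_zero_right _
  | add _ _ _ _ h₁ h₂ => rw [inner_add_right, h₁, h₂, add_zero]
  | smul _ _ _ h => rw [inner_smul_right, h, mul_zero]

lemma re_inner_self_apply_le_of_mem_span (hb : ∀ i, T (b i) = (μ i : 𝕜) • b i)
    {S : Set ι} {c : ℝ} (hc : ∀ i ∈ S, μ i ≤ c) {x : E} (hx : x ∈ Submodule.span 𝕜 (b '' S)) :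
    RCLike.re (inner 𝕜 x (T x)) ≤ c * ‖x‖ ^ 2 := by
  rw [re_inner_self_apply_eq_sum hb, ← b.sum_sq_norm_inner_right, Finset.mul_sum]
  refine Finset.sum_le_sum fun i _ => ?_
  by_cases hi : i ∈ S
  · exact mul_le_mul_of_nonneg_right (hc i hi) (sq_nonneg _)
  · simp [inner_eq_zero_of_mem_span hx hi]

lemma le_re_inner_self_apply_of_mem_span (hb : ∀ i, T (b i) = (μ i : 𝕜) • b i)
    {S : Set ι} {c : ℝ} (hc : ∀ i ∈ S, c ≤ μ i) {x : E} (hx : x ∈ Submodule.span 𝕜 (b '' S)) :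
    c * ‖x‖ ^ 2 ≤ RCLike.re (inner 𝕜 x (T x)) := by
  rw [re_inner_self_apply_eq_sum hb, ← b.sum_sq_norm_inner_right, Finset.mul_sum]
  refine Finset.sum_le_sum fun i _ => ?_
  by_cases hi : i ∈ S
  · exact mul_le_mul_of_nonneg_right (hc i hi) (sq_nonneg _)
  · simp [inner_eq_zero_of_mem_span hx hi]

lemma finrank_span_image_orthonormalBasis (b : OrthonormalBasis ι 𝕜 E) (S : Finset ι) :
    Module.finrank 𝕜 (Submodule.span 𝕜 (b '' S)) = S.card := by
  have hli := (b.orthonormal.comp _ Subtype.val_injective (ι' := S)).linearIndependent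
  rw [← Fintype.card_coe, ← finrank_span_eq_card hli, Set.range_comp, Subtype.range_coe_subtype]
  rfl

/-- Weyl's monotonicity theorem. -/
theorem sortDesc_le_sortDesc_of_isPositive_sub {n : ℕ} {S T : E →ₗ[𝕜] E}
    {bS bT : OrthonormalBasis (Fin n) 𝕜 E} {μ ν : Fin n → ℝ}
    (hS : ∀ i, S (bS i) = (μ i : 𝕜) • bS i) (hT : ∀ i, T (bT i) = (ν i : 𝕜) • bT i)
    (hST : (T - S).IsPositive) (k : Fin n) : sortDesc μ k ≤ sortDesc ν k := by
  have : FiniteDimensional 𝕜 E := .of_basis bS.toBasis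
  -- a vector in the span of the top `k + 1` eigenvectors of `S` and of the bottom `n - k`
  -- eigenvectors of `T`; these spans meet by a dimension count
  set V := Submodule.span 𝕜 (bS '' ↑((Finset.Iic k).image (sortDescPerm μ)))
  set W := Submodule.span 𝕜 (bT '' ↑((Finset.Ici k).image (sortDescPerm ν)))
  have hV : Module.finrank 𝕜 V = k + 1 := by
    rw [finrank_span_image_orthonormalBasis, Finset.card_image_of_injective _ (Equiv.injective _),
      Fin.card_Iic]
  have hW : Module.finrank 𝕜 W = n - k := by
    rw [finrank_span_image_orthonormalBasis, Finset.card_image_of_injective _ (Equiv.injective _),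
      Fin.card_Ici]
  have hE : Module.finrank 𝕜 E = n := by
    simpa using Module.finrank_eq_card_basis bS.toBasis
  obtain ⟨x, hx, hx0⟩ := Submodule.exists_mem_ne_zero_of_ne_bot (p := V ⊓ W) fun h => by
    have hdim := Submodule.finrank_sup_add_finrank_inf_eq V W
    have hsup := Submodule.finrank_le (V ⊔ W)
    rw [h, finrank_bot, add_zero, hV, hW] at hdim
    omega
  have hSx := le_re_inner_self_apply_of_mem_span hS
    (fun _ hi => sortDesc_le_of_mem_image_Iic hi) (Submodule.mem_inf.mp hx).1
  have hTx := re_inner_self_apply_le_of_mem_span hT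
    (fun _ hi => le_sortDesc_of_mem_image_Ici hi) (Submodule.mem_inf.mp hx).2
  have hSTx := hST.re_inner_nonneg_right x
  rw [LinearMap.sub_apply, inner_sub_right, map_sub, sub_nonneg] at hSTx
  exact le_of_mul_le_mul_right (hSx.trans (hSTx.trans hTx)) (by positivity)

end CourantFischer

section Mirsky

variable {n : ℕ}

lemma toEuclideanLin_eigenvectorBasis {A : Matrix (Fin n) (Fin n) ℂ} (hA : A.IsHermitian)
    (i : Fin n) :
    toEuclideanLin A (hA.eigenvectorBasis i) = (hA.eigenvalues i : ℂ) • hA.eigenvectorBasis i := by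
  apply WithLp.ofLp_injective
  rw [ofLp_toLpLin, toLin'_apply, hA.mulVec_eigenvectorBasis, WithLp.ofLp_smul,
    RCLike.real_smul_eq_coe_smul (K := ℂ)]
  rfl

lemma sortDesc_eigenvalues_le_of_posSemidef_sub {A B : Matrix (Fin n) (Fin n) ℂ}
    (hA : A.IsHermitian) (hB : B.IsHermitian) (hAB : (B - A).PosSemidef) (k : Fin n) :
    sortDesc hA.eigenvalues k ≤ sortDesc hB.eigenvalues k :=
  sortDesc_le_sortDesc_of_isPositive_sub (toEuclideanLin_eigenvectorBasis hA)
    (toEuclideanLin_eigenvectorBasis hB) (by rwa [← map_sub, isPositive_toEuclideanLin_iff]) k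

/-- Lidskii's inequality in `ℓ¹` form. -/
theorem sum_abs_sortDesc_eigenvalues_sub_le {X Z : Matrix (Fin n) (Fin n) ℂ}
    (hX : X.IsHermitian) (hZ : Z.IsHermitian) :
    ∑ k, |sortDesc hX.eigenvalues k - sortDesc hZ.eigenvalues k| ≤ nucNorm (X - Z) := by
  obtain ⟨P, N, hP, hN, hXZ, htrace⟩ := (hX.sub hZ).exists_posSemidef_sub_eq
  have hYX : Z + P - X = N := by rw [← sub_sub_self P N, ← hXZ]; abel
  have hY : (Z + P).IsHermitian := hZ.add hP.1
  have hXY := sortDesc_eigenvalues_le_of_posSemidef_sub hX hY (hYX ▸ hN)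
  have hZY := sortDesc_eigenvalues_le_of_posSemidef_sub hZ hY (by rwa [add_sub_cancel_left])
  set x := sortDesc hX.eigenvalues
  set z := sortDesc hZ.eigenvalues
  set y := sortDesc hY.eigenvalues
  calc ∑ k, |x k - z k| ≤ ∑ k, ((y k - x k) + (y k - z k)) :=
        Finset.sum_le_sum fun k _ =>
          abs_sub_le_iff.mpr ⟨by linarith [hXY k, hZY k], by linarith [hXY k, hZY k]⟩
    _ = ((Z + P).trace.re - X.trace.re) + ((Z + P).trace.re - Z.trace.re) := by
        simp only [Finset.sum_add_distrib, Finset.sum_sub_distrib, x, y, z, sum_sortDesc,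
          hX.re_trace_eq_sum_eigenvalues, hY.re_trace_eq_sum_eigenvalues,
          hZ.re_trace_eq_sum_eigenvalues]
    _ = N.trace.re + P.trace.re := by
        rw [← hYX, trace_sub, trace_add, Complex.sub_re, Complex.add_re]
        ring
    _ = nucNorm (X - Z) := by rw [add_comm, htrace]

/-- Mirsky's inequality for Hermitian matrices. -/
theorem sum_abs_singVals_sub_le {X Z : Matrix (Fin n) (Fin n) ℂ}
    (hX : X.IsHermitian) (hZ : Z.IsHermitian) :
    ∑ k, |singVals X k - singVals Z k| ≤ nucNorm (X - Z) := by
  have hsing {W : Matrix (Fin n) (Fin n) ℂ} (hW : W.IsHermitian) :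
      singVals W = sortDesc fun k => |sortDesc hW.eigenvalues k| := by
    rw [singVals_eq_sortDesc_abs_eigenvalues hW, sortDesc_eq_comp hW.eigenvalues]
    exact (sortDesc_comp_perm _ _).symm
  rw [hsing hX, hsing hZ]
  calc _ ≤ ∑ k, |(|sortDesc hX.eigenvalues k| - |sortDesc hZ.eigenvalues k|)| :=
        sum_abs_sortDesc_sub_le _ _
    _ ≤ ∑ k, |sortDesc hX.eigenvalues k - sortDesc hZ.eigenvalues k| :=
        Finset.sum_le_sum fun _ _ => abs_abs_sub_abs_le_abs_sub _ _
    _ ≤ nucNorm (X - Z) := sum_abs_sortDesc_eigenvalues_sub_le hX hZ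

end Mirsky

section NullSpaceProperty

variable {n : ℕ}

lemma singVals_nonneg (M : Matrix (Fin n) (Fin n) ℂ) (i : Fin n) : 0 ≤ singVals M i :=
  sortDesc_nonneg (fun _ => Real.sqrt_nonneg _) i

lemma tailNuc_nonneg (M : Matrix (Fin n) (Fin n) ℂ) (r : ℕ) : 0 ≤ tailNuc M r :=
  Finset.sum_nonneg fun i _ => by split_ifs <;> simp [singVals_nonneg]

lemma nucNorm_eq_headNuc_add_tailNuc (M : Matrix (Fin n) (Fin n) ℂ) (r : ℕ) :
    nucNorm M = headNuc M r + tailNuc M r := by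
  rw [nucNorm, headNuc, tailNuc, ← Finset.sum_add_distrib]
  refine Finset.sum_congr rfl fun i _ => ?_
  by_cases h : (i : ℕ) < r <;> simp [h, not_lt.mp]

lemma headNuc_le_sqrt_mul_headFro (M : Matrix (Fin n) (Fin n) ℂ) (r : ℕ) :
    headNuc M r ≤ √r * headFro M r := by
  set S := Finset.univ.filter fun i : Fin n => (i : ℕ) < r
  have hcard : (S.card : ℝ) ≤ r := by
    have := Finset.card_le_card_of_injOn (s := S) (fun i : Fin n => (i : ℕ))
      (t := Finset.range r) (fun i hi => by simpa [S] using hi) Fin.val_injective.injOn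
    exact_mod_cast this.trans (Finset.card_range r).le
  have hsum : headNuc M r = ∑ i ∈ S, singVals M i := by rw [headNuc, Finset.sum_filter]
  have hsq : headFro M r = √(∑ i ∈ S, singVals M i ^ 2) := by rw [headFro, Finset.sum_filter]
  rw [hsum, hsq, ← Real.sqrt_mul (Nat.cast_nonneg r),
    Real.le_sqrt (Finset.sum_nonneg fun i _ => singVals_nonneg M i)
      (mul_nonneg (Nat.cast_nonneg r) (Finset.sum_nonneg fun i _ => sq_nonneg _))]
  calc (∑ i ∈ S, singVals M i) ^ 2 ≤ S.card * ∑ i ∈ S, singVals M i ^ 2 :=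
        sq_sum_le_card_mul_sum_sq
    _ ≤ r * ∑ i ∈ S, singVals M i ^ 2 :=
        mul_le_mul_of_nonneg_right hcard (Finset.sum_nonneg fun i _ => sq_nonneg _)

lemma headNuc_le_of_headFro_le {M : Matrix (Fin n) (Fin n) ℂ} {r : ℕ} {ρ : ℝ} (hρ : 0 ≤ ρ)
    (h : headFro M r ≤ ρ / √r * tailNuc M r) : headNuc M r ≤ ρ * tailNuc M r := by
  rcases Nat.eq_zero_or_pos r with rfl | hr
  · simpa [headNuc] using mul_nonneg hρ (tailNuc_nonneg M 0)
  · have hr' : 0 < √(r : ℝ) := Real.sqrt_pos.mpr (by exact_mod_cast hr)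
    calc headNuc M r ≤ √r * headFro M r := headNuc_le_sqrt_mul_headFro M r
      _ ≤ √r * (ρ / √r * tailNuc M r) := mul_le_mul_of_nonneg_left h hr'.le
      _ = ρ * tailNuc M r := by field_simp

lemma headNuc_sub_add_tailNuc_sub_le (X Y : Matrix (Fin n) (Fin n) ℂ) (r : ℕ) :
    headNuc X r - headNuc Y r + (tailNuc Y r - tailNuc X r) ≤
      ∑ k, |singVals X k - singVals Y k| := by
  simp only [headNuc, tailNuc, ← Finset.sum_sub_distrib, ← Finset.sum_add_distrib]
  refine Finset.sum_le_sum fun k _ => ?_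
  by_cases h : (k : ℕ) < r
  · simpa [h, not_le.mpr h] using le_abs_self (singVals X k - singVals Y k)
  · simpa [h, not_lt.mp h, add_comm] using neg_abs_le (singVals X k - singVals Y k)

lemma tailNuc_sub_le {X Z : Matrix (Fin n) (Fin n) ℂ} (hX : X.IsHermitian) (hZ : Z.IsHermitian)
    (hnuc : nucNorm Z ≤ nucNorm X) (r : ℕ) :
    tailNuc (X - Z) r ≤ headNuc (X - Z) r + 2 * tailNuc X r := by
  have hmirsky := sum_abs_singVals_sub_le hX (hX.sub hZ)
  rw [sub_sub_cancel] at hmirsky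
  have := headNuc_sub_add_tailNuc_sub_le X (X - Z) r
  linarith [nucNorm_eq_headNuc_add_tailNuc X r]

end NullSpaceProperty

end RT

theorem stmt1_general {n m : ℕ} (r : ℕ)
    (A : Matrix (Fin n) (Fin n) ℂ → (Fin m → ℝ))
    (hadd : ∀ X Y, A (X + Y) = A X + A Y)
    (ρ : ℝ) (hρ0 : 0 < ρ) (hρ1 : ρ < 1)
    (hNSP : ∀ M : Matrix (Fin n) (Fin n) ℂ, M.IsHermitian → A M = 0 →
      RT.headFro M r ≤ (ρ / Real.sqrt r) * RT.tailNuc M r)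
    (X Z : Matrix (Fin n) (Fin n) ℂ) (hX : X.IsHermitian) (hZ : Z.IsHermitian)
    (hAXZ : A X = A Z) (hnuc : RT.nucNorm Z ≤ RT.nucNorm X) :
    RT.nucNorm (X - Z) ≤ (2 * (1 + ρ) / (1 - ρ)) * RT.tailNuc X r := by
  have hker : A (X - Z) = 0 := by
    simpa [hAXZ] using hadd (X - Z) Z
  have hhead := RT.headNuc_le_of_headFro_le hρ0.le (hNSP _ (hX.sub hZ) hker)
  have htail := RT.tailNuc_sub_le hX hZ hnuc r
  have htail_nonneg := RT.tailNuc_nonneg (X - Z) r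
  rw [RT.nucNorm_eq_headNuc_add_tailNuc, div_mul_eq_mul_div, le_div_iff₀ (by linarith)]
  nlinarith [mul_nonneg (sub_nonneg.mpr hhead) (by linarith : (0 : ℝ) ≤ 1 - ρ)]

theorem stmt1 {n m : ℕ} (r : ℕ)
    (A : Matrix (Fin n) (Fin n) ℂ → (Fin m → ℝ))
    (hadd : ∀ X Y, A (X + Y) = A X + A Y)
    (hsmul : ∀ (c : ℝ) (X), A (c • X) = c • A X)
    (ρ : ℝ) (hρ0 : 0 < ρ) (hρ1 : ρ < 1)
    (hNSP : ∀ M : Matrix (Fin n) (Fin n) ℂ, M.IsHermitian → A M = 0 →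
      RT.headFro M r ≤ (ρ / Real.sqrt r) * RT.tailNuc M r)
    (X Z : Matrix (Fin n) (Fin n) ℂ) (hX : X.IsHermitian) (hZ : Z.IsHermitian)
    (hAXZ : A X = A Z) (hnuc : RT.nucNorm Z ≤ RT.nucNorm X) :
    RT.nucNorm (X - Z) ≤ (2 * (1 + ρ) / (1 - ρ)) * RT.tailNuc X r :=
  stmt1_general r A hadd ρ hρ0 hρ1 hNSP X Z hX hZ hAXZ hnuc
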